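/- arXiv:2201.12714 — 3 statements merged into one kernel-verified Lean document; each statement's English description precedes it below -/
import Mathlib

section
/- The intersection of two block lower-triangular affine groups BLTA(s') and BLTA(s'') on F_2^m is again a block lower-triangular affine group BLTA(s), where the set of partial sums of s equals the union of the sets of partial sums of s' and s''. -/
/-- The set of partial sums `S_t = s_1 + ... + s_{t-1}` of a composition `s`. -/
def partialSums (s : List ℕ) : Set ℕ := {n | ∃ t, n = (s.take t).sum}

/-- `M` is block lower-triangular with block boundaries `B`. -/
def BlockLT {m : ℕ} (B : Set ℕ) (M : Matrix (Fin m) (Fin m) (ZMod 2)) : Prop :=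
  ∀ j k : Fin m, (∃ t ∈ B, (j : ℕ) < t ∧ t ≤ (k : ℕ)) → M j k = 0

/-- The BLTA group with block boundaries `B`, as a set of affine maps. -/
def BLTAset (m : ℕ) (B : Set ℕ) : Set ((Fin m → ZMod 2) → (Fin m → ZMod 2)) :=
  {f | ∃ (M : Matrix (Fin m) (Fin m) (ZMod 2)) (b : Fin m → ZMod 2),
    IsUnit M ∧ BlockLT B M ∧ f = fun a => M.mulVec a + b}

/-- An affine map determines its matrix and offset uniquely. -/
lemma affine_eq_iff {m : ℕ} (M M' : Matrix (Fin m) (Fin m) (ZMod 2))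
    (b b' : Fin m → ZMod 2)
    (h : (fun a => M.mulVec a + b) = fun a => M'.mulVec a + b') :
    M = M' ∧ b = b' := by
  have h0 : b = b' := by
    have := congrFun h 0
    simpa using this
  refine ⟨?_, h0⟩
  ext j k
  have := congrFun (congrFun h (Pi.single k 1)) j
  rw [h0] at this
  have h2 : M.mulVec (Pi.single k 1) j = M'.mulVec (Pi.single k 1) j := by
    have := add_right_cancel this
    exact this
  simpa [Matrix.mulVec_single] using h2

/-- The intersection of two BLTA groups `BLTA(s')` and `BLTA(s'')`
on `F_2^m` is the BLTA group `BLTA(s)`, where the set of partial sums of `s`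
is the union of the sets of partial sums of `s'` and `s''`. -/
theorem BLTA_intersection (m : ℕ) (s' s'' s : List ℕ)
    (hpos' : ∀ x ∈ s', 0 < x) (hsum' : s'.sum = m)
    (hpos'' : ∀ x ∈ s'', 0 < x) (hsum'' : s''.sum = m)
    (hpos : ∀ x ∈ s, 0 < x) (hsum : s.sum = m)
    (hB : partialSums s = partialSums s' ∪ partialSums s'') :
    BLTAset m (partialSums s) =
      BLTAset m (partialSums s') ∩ BLTAset m (partialSums s'') := by
  rw [hB]
  ext f
  simp only [Set.mem_inter_iff]
  constructor
  · rintro ⟨M, b, hU, hLT, rfl⟩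
    exact ⟨⟨M, b, hU, fun j k ⟨t, ht, h1, h2⟩ => hLT j k ⟨t, Or.inl ht, h1, h2⟩, rfl⟩,
           ⟨M, b, hU, fun j k ⟨t, ht, h1, h2⟩ => hLT j k ⟨t, Or.inr ht, h1, h2⟩, rfl⟩⟩
  · rintro ⟨⟨M, b, hU, hLT, rfl⟩, ⟨M', b', hU', hLT', hf⟩⟩
    obtain ⟨hMM, -⟩ := affine_eq_iff M M' b b' hf
    refine ⟨M, b, hU, ?_, rfl⟩
    rintro j k ⟨t, ht, h1, h2⟩
    cases ht with
    | inl h => exact hLT j k ⟨t, h, h1, h2⟩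
    | inr h => rw [hMM]; exact hLT' j k ⟨t, h, h1, h2⟩
end

section
/- Let m ≥ 4 and let I ⊆ F_2^m be a decreasing monomial set (identified with subsets of exponent vectors). It is impossible that simultaneously all vectors with a_1=0, a_{m-1}=1, a_m=0 lie in I and all vectors with a_1=1, a_{m-1}=1, a_m=0 lie in the complement of I. -/
/-- The partial order `g ≼ f` on monomials (exponent vectors in `F_2^m`). -/
def MonLE {m : ℕ} (g f : Fin m → ZMod 2) : Prop :=
  ∃ ψ : Fin m → Fin m, Function.Injective ψ ∧
    ∀ i, g i = 1 → (i ≤ ψ i ∧ f (ψ i) = 1)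

/-- A set of monomials is decreasing if it is downward closed under `≼`. -/
def DecreasingSet {m : ℕ} (I : Set (Fin m → ZMod 2)) : Prop :=
  ∀ f g : Fin m → ZMod 2, MonLE g f → f ∈ I → g ∈ I

set_option maxHeartbeats 1000000 in
/-- For `m ≥ 4` and a decreasing monomial set `I ⊆ F_2^m`, it is
impossible that all vectors with `a_1 = 0, a_{m-1} = 1, a_m = 0` lie in `I`
while all vectors with `a_1 = 1, a_{m-1} = 1, a_m = 0` lie outside `I`
(coordinates 0-indexed: `a_1 ↦ 0`, `a_{m-1} ↦ m-2`, `a_m ↦ m-1`). -/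
theorem no_decreasing_split {m : ℕ} (hm : 4 ≤ m)
    (I : Set (Fin m → ZMod 2)) (hdec : DecreasingSet I) :
    ¬ ((∀ a : Fin m → ZMod 2,
          a ⟨0, by omega⟩ = 0 → a ⟨m - 2, by omega⟩ = 1 → a ⟨m - 1, by omega⟩ = 0 →
          a ∈ I) ∧
       (∀ a : Fin m → ZMod 2,
          a ⟨0, by omega⟩ = 1 → a ⟨m - 2, by omega⟩ = 1 → a ⟨m - 1, by omega⟩ = 0 →
          a ∉ I)) := by
  rintro ⟨h1, h2⟩
  have hm2 : m - 2 < m := by omega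
  have hm1 : m - 1 < m := by omega
  have h0 : (0:ℕ) < m := by omega
  have h1lt : (1:ℕ) < m := by omega
  let i0 : Fin m := ⟨0, h0⟩
  let i1 : Fin m := ⟨1, h1lt⟩
  let im2 : Fin m := ⟨m - 2, hm2⟩
  let im1 : Fin m := ⟨m - 1, hm1⟩
  have h01 : i0 ≠ i1 := by simp [i0, i1, Fin.ext_iff]
  have h0m2 : i0 ≠ im2 := by simp [i0, im2, Fin.ext_iff]; omega
  have h1m2 : i1 ≠ im2 := by simp [i1, im2, Fin.ext_iff]; omega
  have h1m1 : i1 ≠ im1 := by simp [i1, im1, Fin.ext_iff]; omega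
  have h0m1 : i0 ≠ im1 := by simp [i0, im1, Fin.ext_iff]; omega
  have hm2m1 : im2 ≠ im1 := by simp [im2, im1, Fin.ext_iff]; omega
  classical
  let f : Fin m → ZMod 2 := fun j => if j = i1 ∨ j = im2 then 1 else 0
  let g : Fin m → ZMod 2 := fun j => if j = i0 ∨ j = im2 then 1 else 0
  have hfI : f ∈ I := by
    apply h1
    · show f i0 = 0
      simp [f, h01, h0m2]
    · show f im2 = 1
      simp [f]
    · show f im1 = 0
      simp [f, h1m1.symm, hm2m1.symm]
  have hgf : MonLE g f := by
    refine ⟨Equiv.swap i0 i1, (Equiv.swap i0 i1).injective, fun i hi => ?_⟩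
    have hcase : i = i0 ∨ i = im2 := by
      by_contra hc
      push_neg at hc
      simp only [g, if_neg (by tauto : ¬(i = i0 ∨ i = im2))] at hi
      exact one_ne_zero hi.symm
    rcases hcase with rfl | rfl
    · refine ⟨?_, ?_⟩
      · rw [Equiv.swap_apply_left]
        simp [i0, i1, Fin.le_def]
      · rw [Equiv.swap_apply_left]
        simp [f]
    · rw [Equiv.swap_apply_of_ne_of_ne h0m2.symm h1m2.symm]
      exact ⟨le_refl _, by simp [f]⟩
  have hgI : g ∈ I := hdec f g hgf hfI
  exact h2 g (by show g i0 = 1; simp [g]) (by show g im2 = 1; simp [g])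
    (by show g im1 = 0; simp [g, h0m1.symm, hm2m1.symm]) hgI
end

section
/- Let M be an invertible m×m upper-triangular matrix over F_2 (unit diagonal) with block structure s(M) = ⟨s_1,...,s_l⟩ and S_l = s_1+...+s_{l-1}. Let π be the permutation of {0,...,2^m-1} induced by M. Then for every residue class r mod 2^{S_l}, π maps the set {z : z ≡ r mod 2^{S_l}} onto the set {z : z ≡ π(r) mod 2^{S_l}}, where the residue of π(z) mod 2^{S_l} depends only on the residue of z mod 2^{S_l}. -/
/-!
Identify `z < 2 ^ m` with its bit vector in `𝔽₂ᵐ`; then `matPerm M` is `v ↦ M v`, and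
`z ≡ z' [MOD 2 ^ S]` says that the bit vectors agree on the first `S` coordinates. The block
condition says that `M` maps the subspace `W` of vectors vanishing on those coordinates into
itself; since `M` is injective and `W` is finite-dimensional, `M W = W`. Hence `M v` and `M v'`
agree on the first `S` coordinates if and only if `v` and `v'` do: the forward direction is the
first claim, and the backward one, applied to the preimage `z` of `w`, gives the second.
-/

/-- The permutation of `{0,...,2^n-1}` induced by an invertible matrix `N` over
`F_2`, identifying `z` with its binary representation, least significant bit first. -/
def matPerm {n : ℕ} (N : Matrix (Fin n) (Fin n) (ZMod 2)) (z : ℕ) : ℕ :=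
  ∑ i : Fin n, 2 ^ (i : ℕ) *
    (N.mulVec (fun j => if z.testBit (j : ℕ) then 1 else 0) i).val

open Matrix

theorem LinearMap.apply_mem_iff_of_injective {K V : Type*} [Field K] [AddCommGroup V]
    [Module K V] [FiniteDimensional K V] {f : V →ₗ[K] V} (hf : Function.Injective f)
    {p : Submodule K V} (hp : ∀ x ∈ p, f x ∈ p) {x : V} : f x ∈ p ↔ x ∈ p := by
  refine ⟨fun hx => ?_, hp x⟩
  obtain ⟨y, hy, hyx⟩ := (LinearMap.injOn_iff_surjOn hp).mp hf.injOn hx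
  exact hf hyx ▸ hy

theorem Matrix.eqOn_mulVec_iff {K ι : Type*} [Field K] [Fintype ι] [DecidableEq ι]
    {A : Matrix ι ι K} (hA : IsUnit A) {s : Set ι} (hblock : ∀ i ∈ s, ∀ j ∉ s, A i j = 0)
    {v w : ι → K} : Set.EqOn (A *ᵥ v) (A *ᵥ w) s ↔ Set.EqOn v w s := by
  let W : Submodule K (ι → K) := Submodule.pi s fun _ => ⊥
  have eqOn_iff : ∀ v w : ι → K, Set.EqOn v w s ↔ v - w ∈ W := by
    simp [W, Set.EqOn, sub_eq_zero]
  have mulVec_mem : ∀ u ∈ W, A *ᵥ u ∈ W := by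
    intro u hu i hi
    have hu' : ∀ j ∈ s, u j = 0 := fun j hj => (Submodule.mem_bot K).mp (hu j hj)
    refine (Submodule.mem_bot K).mpr (Finset.sum_eq_zero fun j _ => ?_)
    by_cases hj : j ∈ s
    · simp [hu' j hj]
    · simp [hblock i hi j hj]
  rw [eqOn_iff, eqOn_iff, ← mulVec_sub]
  exact LinearMap.apply_mem_iff_of_injective (f := A.mulVecLin)
    (mulVec_injective_iff_isUnit.mpr hA) mulVec_mem

theorem Nat.mod_two_pow_eq_mod_two_pow_iff {x y S : ℕ} :
    x % 2 ^ S = y % 2 ^ S ↔ ∀ i < S, x.testBit i = y.testBit i := by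
  refine ⟨fun h i hi => ?_, fun h => Nat.eq_of_testBit_eq fun i => ?_⟩
  · simpa [hi] using congrArg (Nat.testBit · i) h
  · by_cases hi : i < S <;> simp [hi, h]

def bitVec (m z : ℕ) : Fin m → ZMod 2 := fun j => if z.testBit j then 1 else 0

def ofBitVec {m : ℕ} (v : Fin m → ZMod 2) : ℕ := ∑ i : Fin m, 2 ^ (i : ℕ) * (v i).val

/-- `finFunctionFinEquiv`, typed with `ZMod 2` (definitionally `Fin 2`) so that rewriting with it
does not mix the two types. -/
def binaryEquiv (m : ℕ) : (Fin m → ZMod 2) ≃ Fin (2 ^ m) := finFunctionFinEquiv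

lemma ofBitVec_eq_binaryEquiv {m : ℕ} (v : Fin m → ZMod 2) : ofBitVec v = binaryEquiv m v :=
  (Fintype.sum_congr _ _ fun _ => mul_comm _ _).trans (finFunctionFinEquiv_apply v).symm

lemma val_binaryEquiv_symm_apply {m : ℕ} (a : Fin (2 ^ m)) (j : Fin m) :
    ((binaryEquiv m).symm a j).val = a / 2 ^ (j : ℕ) % 2 :=
  finFunctionFinEquiv_symm_apply_val a j

lemma bitVec_eq_binaryEquiv_symm {m z : ℕ} (hz : z < 2 ^ m) :
    bitVec m z = (binaryEquiv m).symm ⟨z, hz⟩ := by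
  funext j
  apply ZMod.val_injective
  rw [val_binaryEquiv_symm_apply, bitVec, Nat.testBit_eq_decide_div_mod_eq]
  rcases Nat.mod_two_eq_zero_or_one (z / 2 ^ (j : ℕ)) with h | h <;> simp [h, ZMod.val_one]

lemma ofBitVec_lt {m : ℕ} (v : Fin m → ZMod 2) : ofBitVec v < 2 ^ m := by
  rw [ofBitVec_eq_binaryEquiv]
  exact Fin.isLt _

@[simp]
lemma bitVec_ofBitVec {m : ℕ} (v : Fin m → ZMod 2) : bitVec m (ofBitVec v) = v := by
  rw [bitVec_eq_binaryEquiv_symm (ofBitVec_lt v)]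
  simp_rw [ofBitVec_eq_binaryEquiv, Fin.eta, Equiv.symm_apply_apply]

lemma ofBitVec_bitVec {m z : ℕ} (hz : z < 2 ^ m) : ofBitVec (bitVec m z) = z := by
  rw [bitVec_eq_binaryEquiv_symm hz, ofBitVec_eq_binaryEquiv, Equiv.apply_symm_apply]

lemma bitVec_apply_eq_iff {m x y : ℕ} {j : Fin m} :
    bitVec m x j = bitVec m y j ↔ x.testBit j = y.testBit j := by
  unfold bitVec
  cases x.testBit j <;> cases y.testBit j <;> decide

lemma mod_two_pow_eq_iff_eqOn_bitVec {m S x y : ℕ} (hx : x < 2 ^ m) (hy : y < 2 ^ m) :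
    x % 2 ^ S = y % 2 ^ S ↔ Set.EqOn (bitVec m x) (bitVec m y) {j | (j : ℕ) < S} := by
  rw [Nat.mod_two_pow_eq_mod_two_pow_iff]
  refine ⟨fun h j hj => bitVec_apply_eq_iff.mpr (h j hj), fun h i hi => ?_⟩
  by_cases him : i < m
  · exact bitVec_apply_eq_iff.mp (h (x := ⟨i, him⟩) hi)
  · have h2m : 2 ^ m ≤ 2 ^ i := Nat.pow_le_pow_right two_pos (not_lt.mp him)
    rw [Nat.testBit_lt_two_pow (hx.trans_le h2m), Nat.testBit_lt_two_pow (hy.trans_le h2m)]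

lemma matPerm_eq_ofBitVec {m : ℕ} (N : Matrix (Fin m) (Fin m) (ZMod 2)) (z : ℕ) :
    matPerm N z = ofBitVec (N *ᵥ bitVec m z) := rfl

lemma matPerm_mod_two_pow_eq_iff {m S : ℕ} {M : Matrix (Fin m) (Fin m) (ZMod 2)}
    (hM : IsUnit M) (hblock : ∀ i j : Fin m, (i : ℕ) < S → S ≤ (j : ℕ) → M i j = 0)
    {z₁ z₂ : ℕ} (h₁ : z₁ < 2 ^ m) (h₂ : z₂ < 2 ^ m) :
    matPerm M z₁ % 2 ^ S = matPerm M z₂ % 2 ^ S ↔ z₁ % 2 ^ S = z₂ % 2 ^ S := by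
  rw [matPerm_eq_ofBitVec, matPerm_eq_ofBitVec,
    mod_two_pow_eq_iff_eqOn_bitVec (ofBitVec_lt _) (ofBitVec_lt _),
    mod_two_pow_eq_iff_eqOn_bitVec h₁ h₂, bitVec_ofBitVec, bitVec_ofBitVec]
  exact eqOn_mulVec_iff hM fun i hi j hj => hblock i j hi (not_lt.mp hj)

theorem matPerm_residue_classes_general {m S : ℕ}
    (M : Matrix (Fin m) (Fin m) (ZMod 2))
    (hM : IsUnit M)
    (hblock : ∀ i j : Fin m, (i : ℕ) < S → S ≤ (j : ℕ) → M i j = 0) :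
    (∀ z₁ < 2 ^ m, ∀ z₂ < 2 ^ m, z₁ % 2 ^ S = z₂ % 2 ^ S →
      matPerm M z₁ % 2 ^ S = matPerm M z₂ % 2 ^ S) ∧
    (∀ r < 2 ^ m, ∀ w < 2 ^ m, w % 2 ^ S = matPerm M r % 2 ^ S →
      ∃ z, z < 2 ^ m ∧ z % 2 ^ S = r % 2 ^ S ∧ matPerm M z = w) := by
  refine ⟨fun z₁ h₁ z₂ h₂ => (matPerm_mod_two_pow_eq_iff hM hblock h₁ h₂).mpr,
    fun r hr w hw hwr => ?_⟩
  obtain ⟨u, hu⟩ := mulVec_surjective_iff_isUnit.mpr hM (bitVec m w)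
  have hz : matPerm M (ofBitVec u) = w := by
    rw [matPerm_eq_ofBitVec, bitVec_ofBitVec, hu, ofBitVec_bitVec hw]
  refine ⟨ofBitVec u, ofBitVec_lt u, ?_, hz⟩
  rwa [← matPerm_mod_two_pow_eq_iff hM hblock (ofBitVec_lt u) hr, hz]

/-- Let `M` be an invertible upper-triangular matrix over `F_2`
with `M([1,S],[S+1,m]) = 0` (`S = S_l`), and `π` the induced permutation of
`{0,...,2^m-1}`.  Then the residue of `π(z)` mod `2^S` depends only on the
residue of `z` mod `2^S`, and `π` maps each residue class
`{z : z ≡ r mod 2^S}` onto the residue class `{z : z ≡ π(r) mod 2^S}`. -/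
theorem matPerm_residue_classes {m S : ℕ} (hS : S ≤ m)
    (M : Matrix (Fin m) (Fin m) (ZMod 2))
    (hM : IsUnit M)
    (hdiag : ∀ i, M i i = 1) (hupper : ∀ i j : Fin m, j < i → M i j = 0)
    (hblock : ∀ i j : Fin m, (i : ℕ) < S → S ≤ (j : ℕ) → M i j = 0) :
    (∀ z₁ < 2 ^ m, ∀ z₂ < 2 ^ m, z₁ % 2 ^ S = z₂ % 2 ^ S →
      matPerm M z₁ % 2 ^ S = matPerm M z₂ % 2 ^ S) ∧
    (∀ r < 2 ^ m, ∀ w < 2 ^ m, w % 2 ^ S = matPerm M r % 2 ^ S →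
      ∃ z, z < 2 ^ m ∧ z % 2 ^ S = r % 2 ^ S ∧ matPerm M z = w) :=
  matPerm_residue_classes_general M hM hblock
end
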